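/- arXiv:math-ph/0111048 — 4 statements merged into one kernel-verified Lean document; each statement's English description precedes it below -/
import Mathlib

section
/- The positive solution σ_B of the n-component 2D Bruggeman equation is self-dual: if σ_B(σ₁,…,σₙ) denotes the unique positive root of Σᵢ pᵢ(σᵢ - x)/(σᵢ + x) = 0, then σ_B(σ₁⁻¹,…,σₙ⁻¹) = σ_B(σ₁,…,σₙ)⁻¹. -/
open Finset

/-- Self-duality of the 2D Bruggeman root: if `x` is the positive root of the
equation for conductivities `σᵢ`, and `y` is the unique positive root for the
inverse conductivities `σᵢ⁻¹`, then `y = x⁻¹`. -/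
theorem bruggeman_2D_self_dual (n : ℕ) (hn : 1 ≤ n)
    (σ p : Fin n → ℝ) (hσ : ∀ i, 0 < σ i) (hp : ∀ i, 0 < p i)
    (hpsum : ∑ i, p i = 1)
    (x : ℝ) (hx : 0 < x)
    (hxroot : ∑ i, p i * (σ i - x) / (σ i + x) = 0)
    (y : ℝ) (hy : 0 < y)
    (hyroot : ∑ i, p i * ((σ i)⁻¹ - y) / ((σ i)⁻¹ + y) = 0)
    (hyuniq : ∀ z : ℝ, 0 < z →
      ∑ i, p i * ((σ i)⁻¹ - z) / ((σ i)⁻¹ + z) = 0 → z = y) :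
    y = x⁻¹ := by
  refine (hyuniq x⁻¹ (inv_pos.mpr hx) ?_).symm
  have h : ∀ i, p i * ((σ i)⁻¹ - x⁻¹) / ((σ i)⁻¹ + x⁻¹)
      = -(p i * (σ i - x) / (σ i + x)) := by
    intro i
    have h1 := (hσ i).ne'
    have h2 := hx.ne'
    have h3 : σ i + x ≠ 0 := (add_pos (hσ i) hx).ne'
    have h3' : x + σ i ≠ 0 := (add_pos hx (hσ i)).ne'
    have h4 : (σ i)⁻¹ + x⁻¹ ≠ 0 := (add_pos (inv_pos.mpr (hσ i)) (inv_pos.mpr hx)).ne'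
    field_simp
    ring
  simp_rw [h]
  rw [Finset.sum_neg_distrib, hxroot, neg_zero]
end

section
/- The double sum over all direction pairs of the squared kernel equals 1: Σ_{α,β=1}^d Σ_{z ∈ ℤ^d} Γ_{βα}(z)² = 1. -/
open MeasureTheory Real

/-- The lattice Green's function kernel `Γ_{αβ}(z)` on `ℤ^d`. -/
noncomputable def latticeGamma (d : ℕ) (α β : Fin d) (z : Fin d → ℤ) : ℝ :=
  -∫ l : Fin d → ℝ in Set.univ.pi fun _ : Fin d => Set.Icc (0 : ℝ) 1,
    (Real.sin (π * l α) * Real.sin (π * l β) *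
        Real.cos (2 * π * ((∑ γ, l γ * (z γ : ℝ)) - l α / 2 + l β / 2))) /
      ∑ γ, Real.sin (π * l γ) ^ 2

/-!
Put `s(t) = sin (π t) e^{-iπt} = (1 - e^{-2πit}) / 2i`, a function on `ℝ/ℤ`. The integrand
defining `Γ_{αβ}(z)` is the real part of `e^{2πi⟨λ,z⟩} h_{αβ}(λ)`, where
`h_{αβ}(λ) = s(λ_α) conj (s(λ_β)) / Σ_γ |s(λ_γ)|²` is bounded by `1` on the torus `ℝ^d/ℤ^d`.
Hence `Γ_{αβ}(z)` is minus the real part of the `(-z)`-th Fourier coefficient of `h_{αβ}`.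
These coefficients are real because `h_{αβ}(-λ) = conj (h_{αβ}(λ))`, so Parseval gives
`Σ_z Γ_{αβ}(z)² = ∫ |h_{αβ}|²`. Finally `Σ_{α,β} |h_{αβ}|² = 1` off the origin, a null set.
-/

open UnitAddTorus
open scoped ComplexConjugate

-- The Haar probability measure on `ℝ/ℤ`, for which Mathlib states Parseval on `UnitAddTorus`.
attribute [local instance] instMeasureSpaceUnitAddCircle
  instIsProbabilityMeasureUnitAddCircleVolume instIsAddHaarMeasureUnitAddCircleVolume

instance : Nontrivial UnitAddCircle :=
  ⟨⟨((1 / 2 : ℝ) : UnitAddCircle), 0, by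
    rw [ne_eq, AddCircle.coe_eq_zero_iff_of_mem_Ico (by norm_num)]; norm_num⟩⟩

instance : NullSingletonClass (volume : Measure UnitAddCircle) :=
  Measure.IsAddHaarMeasure.nullSingletonClass _

noncomputable def sinPhase (t : UnitAddCircle) : ℂ := (1 - fourier (-1) t) / (2 * Complex.I)

theorem sinPhase_coe (t : ℝ) :
    sinPhase t = Real.sin (π * t) * Complex.exp (-(π * t) * Complex.I) := by
  have hsq : fourier (-1) (t : UnitAddCircle) = Complex.exp (-(π * t) * Complex.I) ^ 2 := by
    rw [fourier_coe_apply, ← Complex.exp_nat_mul]; congr 1; push_cast; ring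
  rw [sinPhase, hsq, Complex.ofReal_sin, Complex.sin]
  push_cast
  simp only [neg_mul, Complex.exp_neg]
  field_simp
  linear_combination (Complex.exp (π * t * Complex.I) ^ 2 - 1) * Complex.I_sq

theorem normSq_sinPhase_coe (t : ℝ) : Complex.normSq (sinPhase t) = Real.sin (π * t) ^ 2 := by
  rw [sinPhase_coe, Complex.normSq_mul, Complex.normSq_ofReal, Complex.normSq_eq_norm_sq,
    Complex.norm_exp]
  simp [sq]

theorem sinPhase_neg (t : UnitAddCircle) : sinPhase (-t) = -conj (sinPhase t) := by
  have : fourier (-1) (-t) = conj (fourier (-1) t) := by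
    rw [← fourier_neg, neg_neg, fourier_apply, fourier_apply, neg_smul, smul_neg, neg_neg]
  simp only [sinPhase, this, map_div₀, map_sub, map_one, map_mul, Complex.conj_I, map_ofNat]
  ring

theorem sinPhase_eq_zero_iff {t : UnitAddCircle} : sinPhase t = 0 ↔ t = 0 := by
  rw [sinPhase, div_eq_zero_iff, or_iff_left (by simp), sub_eq_zero, eq_comm, fourier_apply,
    Circle.coe_eq_one, ← AddCircle.toCircle_zero,
    (AddCircle.injective_toCircle one_ne_zero).eq_iff, neg_smul, one_smul, neg_eq_zero]

theorem continuous_sinPhase : Continuous sinPhase := by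
  unfold sinPhase; fun_prop

section Symbol

variable {ι : Type*} [Fintype ι]

noncomputable def laplaceSymbol (x : UnitAddTorus ι) : ℝ :=
  ∑ γ, Complex.normSq (sinPhase (x γ))

noncomputable def latticeGammaSymbol (α β : ι) (x : UnitAddTorus ι) : ℂ :=
  sinPhase (x α) * conj (sinPhase (x β)) / laplaceSymbol x

theorem laplaceSymbol_coe (l : ι → ℝ) :
    laplaceSymbol (fun i => (l i : UnitAddCircle)) = ∑ i, Real.sin (π * l i) ^ 2 := by
  simp only [laplaceSymbol, normSq_sinPhase_coe]

theorem normSq_sinPhase_le_laplaceSymbol (x : UnitAddTorus ι) (γ : ι) :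
    Complex.normSq (sinPhase (x γ)) ≤ laplaceSymbol x :=
  Finset.single_le_sum (f := fun γ => Complex.normSq (sinPhase (x γ)))
    (fun _ _ => Complex.normSq_nonneg _) (Finset.mem_univ γ)

theorem laplaceSymbol_eq_zero_iff {x : UnitAddTorus ι} : laplaceSymbol x = 0 ↔ x = 0 := by
  simp only [laplaceSymbol, Finset.sum_eq_zero_iff_of_nonneg fun _ _ => Complex.normSq_nonneg _,
    Finset.mem_univ, true_implies, map_eq_zero, sinPhase_eq_zero_iff, funext_iff, Pi.zero_apply]

theorem laplaceSymbol_neg (x : UnitAddTorus ι) : laplaceSymbol (-x) = laplaceSymbol x := by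
  simp only [laplaceSymbol, Pi.neg_apply, sinPhase_neg, Complex.normSq_neg, Complex.normSq_conj]

theorem latticeGammaSymbol_neg (α β : ι) (x : UnitAddTorus ι) :
    latticeGammaSymbol α β (-x) = conj (latticeGammaSymbol α β x) := by
  simp only [latticeGammaSymbol, laplaceSymbol_neg, Pi.neg_apply, sinPhase_neg, map_neg,
    map_div₀, map_mul, Complex.conj_conj, Complex.conj_ofReal, neg_mul_neg]

theorem sq_norm_latticeGammaSymbol (α β : ι) (x : UnitAddTorus ι) :
    ‖latticeGammaSymbol α β x‖ ^ 2 = Complex.normSq (sinPhase (x α)) *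
      Complex.normSq (sinPhase (x β)) / laplaceSymbol x ^ 2 := by
  rw [latticeGammaSymbol, Complex.sq_norm, Complex.normSq_div, Complex.normSq_mul,
    Complex.normSq_conj, Complex.normSq_ofReal, sq]

theorem norm_latticeGammaSymbol_le_one (α β : ι) (x : UnitAddTorus ι) :
    ‖latticeGammaSymbol α β x‖ ≤ 1 := by
  refine (sq_le_one_iff₀ (norm_nonneg _)).mp ?_
  rw [sq_norm_latticeGammaSymbol, sq]
  refine div_le_one_of_le₀ ?_ (mul_self_nonneg _)
  exact mul_le_mul (normSq_sinPhase_le_laplaceSymbol x α) (normSq_sinPhase_le_laplaceSymbol x β)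
    (Complex.normSq_nonneg _)
    ((Complex.normSq_nonneg _).trans (normSq_sinPhase_le_laplaceSymbol x α))

theorem sum_sum_sq_norm_latticeGammaSymbol {x : UnitAddTorus ι} (hx : x ≠ 0) :
    ∑ α, ∑ β, ‖latticeGammaSymbol α β x‖ ^ 2 = 1 := by
  simp only [sq_norm_latticeGammaSymbol, ← Finset.sum_div, ← Finset.sum_mul_sum]
  rw [← laplaceSymbol, ← sq, div_self (pow_ne_zero _ (laplaceSymbol_eq_zero_iff.not.mpr hx))]

theorem measurable_latticeGammaSymbol (α β : ι) : Measurable (latticeGammaSymbol α β) := by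
  unfold latticeGammaSymbol laplaceSymbol
  have := continuous_sinPhase
  fun_prop

theorem memLp_latticeGammaSymbol (α β : ι) : MemLp (latticeGammaSymbol α β) 2 :=
  .of_bound (measurable_latticeGammaSymbol α β).aestronglyMeasurable 1
    (.of_forall (norm_latticeGammaSymbol_le_one α β))

theorem sum_sum_integral_sq_norm_latticeGammaSymbol [Nonempty ι] :
    ∑ α : ι, ∑ β : ι, ∫ x, ‖latticeGammaSymbol α β x‖ ^ 2 = 1 := by
  have hint (α β : ι) : Integrable fun x => ‖latticeGammaSymbol α β x‖ ^ 2 :=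
    (memLp_latticeGammaSymbol α β).integrable_norm_pow two_ne_zero
  have hnull : ∀ᵐ x : UnitAddTorus ι, x ≠ 0 := compl_mem_ae_iff.mpr (measure_singleton 0)
  calc ∑ α, ∑ β, ∫ x, ‖latticeGammaSymbol α β x‖ ^ 2
      = ∫ x, ∑ α, ∑ β, ‖latticeGammaSymbol α β x‖ ^ 2 := by
        rw [integral_finsetSum _ fun α _ => integrable_finsetSum _ fun β _ => hint α β]
        exact Finset.sum_congr rfl fun α _ => (integral_finsetSum _ fun β _ => hint α β).symm
    _ = ∫ _, 1 := integral_congr_ae (hnull.mono fun _ => sum_sum_sq_norm_latticeGammaSymbol)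
    _ = 1 := by simp

end Symbol

namespace UnitAddTorus

variable {ι : Type*} [Fintype ι]

theorem mFourier_apply_neg (n : ι → ℤ) (x : UnitAddTorus ι) :
    mFourier n (-x) = conj (mFourier n x) := by
  simp only [mFourier, ContinuousMap.coe_mk, Pi.neg_apply, map_prod, fourier_apply, smul_neg,
    fourier_neg']

theorem mFourier_apply_coe (n : ι → ℤ) (l : ι → ℝ) :
    mFourier n (fun i => (l i : UnitAddCircle)) =
      Complex.exp (↑(2 * π * ∑ i, l i * n i) * Complex.I) := by
  simp only [mFourier, ContinuousMap.coe_mk, fourier_coe_apply, ← Complex.exp_sum]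
  congr 1
  push_cast
  rw [Finset.mul_sum, Finset.sum_mul]
  exact Finset.sum_congr rfl fun i _ => by ring

theorem conj_mFourierCoeff_of_apply_neg {f : UnitAddTorus ι → ℂ}
    (hf : ∀ x, f (-x) = conj (f x)) (n : ι → ℤ) :
    conj (mFourierCoeff f n) = mFourierCoeff f n := by
  have := Measure.IsAddHaarMeasure.isNegInvariant_of_regular (volume : Measure (UnitAddTorus ι))
  rw [mFourierCoeff, ← integral_conj, ← integral_neg_eq_self]
  simp only [smul_eq_mul, map_mul, mFourier_apply_neg, hf, Complex.conj_conj]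

theorem hasSum_sq_mFourierCoeff_of_memLp {f : UnitAddTorus ι → ℂ} (hf : MemLp f 2) :
    HasSum (fun n => ‖mFourierCoeff f n‖ ^ 2) (∫ x, ‖f x‖ ^ 2) := by
  have hcoeff : mFourierCoeff (hf.toLp f) = mFourierCoeff f := funext fun n => by
    refine integral_congr_ae ?_
    filter_upwards [hf.coeFn_toLp] with x hx
    rw [hx]
  have hnorm : ∫ x, ‖hf.toLp f x‖ ^ 2 = ∫ x, ‖f x‖ ^ 2 := by
    refine integral_congr_ae ?_
    filter_upwards [hf.coeFn_toLp] with x hx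
    rw [hx]
  simpa only [hcoeff, hnorm] using hasSum_sq_mFourierCoeff (hf.toLp f)

theorem integral_eq_setIntegral_pi_Icc {E : Type*} [NormedAddCommGroup E] [NormedSpace ℝ E]
    (f : UnitAddTorus ι → E) :
    ∫ x, f x = ∫ l in Set.univ.pi fun _ : ι => Set.Icc (0 : ℝ) 1, f fun i => l i := by
  have hbox : {l : ι → ℝ | ∀ i, l i ∈ Set.Ioc ((0 : ι → ℝ) i) ((0 : ι → ℝ) i + 1)} =
      Set.univ.pi fun _ => Set.Ioc 0 1 := by
    ext l
    simp
  rw [integral_preimage f 0, hbox]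
  exact setIntegral_congr_set Measure.pi_Ioc_ae_eq_pi_Icc

end UnitAddTorus

theorem re_mFourier_mul_latticeGammaSymbol {ι : Type*} [Fintype ι] (α β : ι) (n : ι → ℤ)
    (l : ι → ℝ) :
    (mFourier n (fun i => (l i : UnitAddCircle)) *
        latticeGammaSymbol α β (fun i => (l i : UnitAddCircle))).re =
      Real.sin (π * l α) * Real.sin (π * l β) *
          Real.cos (2 * π * ((∑ γ, l γ * (n γ : ℝ)) - l α / 2 + l β / 2)) /
        ∑ γ, Real.sin (π * l γ) ^ 2 := by
  set θ := 2 * π * ((∑ γ, l γ * (n γ : ℝ)) - l α / 2 + l β / 2)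
  have hθ : (θ : ℂ) * Complex.I = ↑(2 * π * ∑ i, l i * n i) * Complex.I +
      -(π * l α) * Complex.I + conj (-(π * l β) * Complex.I) := by
    simp only [θ, map_mul, map_neg, Complex.conj_ofReal, Complex.conj_I]
    push_cast
    ring
  have key : mFourier n (fun i => (l i : UnitAddCircle)) *
      latticeGammaSymbol α β (fun i => (l i : UnitAddCircle)) =
      ↑(Real.sin (π * l α) * Real.sin (π * l β) / ∑ γ, Real.sin (π * l γ) ^ 2) *
        Complex.exp (θ * Complex.I) := by
    rw [latticeGammaSymbol, laplaceSymbol_coe, mFourier_apply_coe, sinPhase_coe, sinPhase_coe,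
      map_mul, Complex.conj_ofReal, ← Complex.exp_conj, hθ, Complex.exp_add, Complex.exp_add]
    push_cast
    ring
  rw [key, Complex.re_ofReal_mul, Complex.exp_ofReal_mul_I_re]
  ring

theorem latticeGamma_eq_neg_re_mFourierCoeff {d : ℕ} (α β : Fin d) (z : Fin d → ℤ) :
    latticeGamma d α β z = -(mFourierCoeff (latticeGammaSymbol α β) (-z)).re := by
  have hcoe : Continuous fun l : Fin d → ℝ => fun i => (l i : UnitAddCircle) := by fun_prop
  have hF : IntegrableOn (fun l : Fin d → ℝ => mFourier z (fun i => (l i : UnitAddCircle)) •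
      latticeGammaSymbol α β (fun i => (l i : UnitAddCircle)))
      (Set.univ.pi fun _ => Set.Icc 0 1) := by
    refine Measure.integrableOn_of_bounded
      (isCompact_univ_pi fun _ => isCompact_Icc).measure_lt_top.ne ?_ (M := 1)
      (.of_forall fun l => ?_)
    · exact ((mFourier z).continuous.comp hcoe).aestronglyMeasurable.smul
        ((measurable_latticeGammaSymbol α β).comp hcoe.measurable).aestronglyMeasurable
    · rw [norm_smul]
      exact mul_le_one₀ ((mFourier z).norm_coe_le_norm _ |>.trans mFourier_norm.le)
        (norm_nonneg _) (norm_latticeGammaSymbol_le_one α β _)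
  rw [latticeGamma, mFourierCoeff, integral_eq_setIntegral_pi_Icc, neg_neg,
    ← RCLike.re_to_complex, ← integral_re hF]
  simp only [smul_eq_mul, RCLike.re_to_complex, re_mFourier_mul_latticeGammaSymbol]

theorem hasSum_latticeGamma_sq {d : ℕ} (α β : Fin d) :
    HasSum (fun z => latticeGamma d α β z ^ 2) (∫ x, ‖latticeGammaSymbol α β x‖ ^ 2) := by
  have hreal (n : Fin d → ℤ) : ((mFourierCoeff (latticeGammaSymbol α β) n).re : ℂ) =
      mFourierCoeff (latticeGammaSymbol α β) n :=
    Complex.conj_eq_iff_re.mp (conj_mFourierCoeff_of_apply_neg (latticeGammaSymbol_neg α β) n)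
  refine ((Equiv.neg _).hasSum_iff.mpr
    (hasSum_sq_mFourierCoeff_of_memLp (memLp_latticeGammaSymbol α β))).congr_fun fun z => ?_
  rw [Function.comp_apply, Equiv.neg_apply, ← hreal, Complex.norm_real, Real.norm_eq_abs, sq_abs,
    latticeGamma_eq_neg_re_mFourierCoeff, neg_sq]

/-- The double sum over all direction pairs of the squared kernel equals 1. -/
theorem latticeGamma_sq_total_sum (d : ℕ) (hd : 2 ≤ d) :
    ∑ α : Fin d, ∑ β : Fin d, ∑' z : Fin d → ℤ, latticeGamma d β α z ^ 2 = 1 := by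
  have : Nonempty (Fin d) := ⟨⟨0, by omega⟩⟩
  simp only [fun α β : Fin d => (hasSum_latticeGamma_sq β α).tsum_eq]
  rw [Finset.sum_comm]
  exact sum_sum_integral_sq_norm_latticeGammaSymbol
end

section
/- In dimension d = 2, the kernel satisfies the antisymmetry Γ₁₁(y,x) = -Γ₁₁(x,y) for all (x,y) ≠ (0,0); consequently Σ_{z ≠ 0} Γ₁₁(z)³ = 0 whenever the sum converges absolutely. -/
/-!
Relabelling the coordinates of the integration variable `λ` by a permutation `σ` shows
`Γ_{αβ}(z ∘ σ) = Γ_{σα,σβ}(z)`; in dimension two this is `Γ₁₁(y,x) = Γ₂₂(x,y)`. On the diagonal the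
factors `sin²(πλ_α)` add up to the denominator, so `Σ_α Γ_{αα}(z) = -∫ cos(2π⟨λ,z⟩) dλ`, which
vanishes for `z ≠ 0` by orthogonality of characters on the torus. Hence `Γ₁₁` is odd under the
involution `(x,y) ↦ (y,x)` of `ℤ² ∖ {0}`, and reindexing the series of cubes by it gives its negative.
-/

open MeasureTheory Real

abbrev unitCube (ι : Type*) : Set (ι → ℝ) := Set.univ.pi fun _ => Set.Icc 0 1

lemma integral_Icc_exp_two_pi_int_mul_I {k : ℤ} (hk : k ≠ 0) :
    ∫ t in Set.Icc (0 : ℝ) 1, Complex.exp (2 * π * k * Complex.I * t) = 0 := by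
  have hc : 2 * π * k * Complex.I ≠ 0 := by simp [pi_ne_zero, hk]
  rw [integral_Icc_eq_integral_Ioc, ← intervalIntegral.integral_of_le zero_le_one,
    integral_exp_mul_complex hc]
  have : 2 * π * k * Complex.I * ((1 : ℝ) : ℂ) = k * (2 * π * Complex.I) := by push_cast; ring
  rw [this, Complex.exp_int_mul_two_pi_mul_I]
  simp

lemma integral_unitCube_cos_two_pi_inner {ι : Type*} [Fintype ι] {z : ι → ℤ} (hz : z ≠ 0) :
    ∫ l in unitCube ι, cos (2 * π * ∑ i, l i * z i) = 0 := by
  obtain ⟨i₀, hi₀⟩ := Function.ne_iff.mp hz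
  have hcos : ∀ l : ι → ℝ, cos (2 * π * ∑ i, l i * z i)
      = RCLike.re (∏ i, Complex.exp (2 * π * z i * Complex.I * l i)) := by
    intro l
    rw [← Complex.exp_sum, ← Complex.exp_ofReal_mul_I_re]
    push_cast
    congr 3
    rw [Finset.mul_sum, Finset.sum_mul]
    exact Finset.sum_congr rfl fun i _ => by ring
  have hint : Integrable (fun l : ι → ℝ => ∏ i, Complex.exp (2 * π * z i * Complex.I * l i))
      (volume.restrict (unitCube ι)) :=
    (by fun_prop : Continuous _).continuousOn.integrableOn_compact
      (isCompact_univ_pi fun _ => isCompact_Icc)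
  simp_rw [hcos]
  rw [integral_re hint, unitCube, volume_pi, Measure.restrict_pi_pi,
    integral_fintype_prod_eq_prod (fun i (t : ℝ) => Complex.exp (2 * π * z i * Complex.I * t)),
    Finset.prod_eq_zero (Finset.mem_univ i₀) (integral_Icc_exp_two_pi_int_mul_I hi₀)]
  simp

lemma piCongrLeft_perm_symm_apply {ι : Type*} (σ : Equiv.Perm ι) (l : ι → ℝ) (i : ι) :
    MeasurableEquiv.piCongrLeft (fun _ => ℝ) σ.symm l i = l (σ i) := by
  simpa using MeasurableEquiv.piCongrLeft_apply_apply σ.symm (β := fun _ => ℝ) l (σ i)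

lemma preimage_unitCube_piCongrLeft {ι : Type*} (σ : Equiv.Perm ι) :
    MeasurableEquiv.piCongrLeft (fun _ => ℝ) σ.symm ⁻¹' unitCube ι = unitCube ι := by
  ext l
  simp only [unitCube, Set.mem_preimage, Set.mem_univ_pi, piCongrLeft_perm_symm_apply]
  exact σ.forall_congr_right (q := fun i => l i ∈ Set.Icc 0 1)

lemma latticeGamma_comp_perm {d : ℕ} (σ : Equiv.Perm (Fin d)) (α β : Fin d) (z : Fin d → ℤ) :
    latticeGamma d α β (z ∘ σ) = latticeGamma d (σ α) (σ β) z := by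
  let e := MeasurableEquiv.piCongrLeft (fun _ : Fin d => ℝ) σ.symm
  have hmp : MeasurePreserving e := volume_measurePreserving_piCongrLeft _ _
  rw [latticeGamma, latticeGamma, ← hmp.setIntegral_preimage_emb e.measurableEmbedding,
    preimage_unitCube_piCongrLeft σ]
  congr 1
  refine setIntegral_congr_fun (MeasurableSet.univ_pi fun _ => measurableSet_Icc) fun l _ => ?_
  simp only [e, piCongrLeft_perm_symm_apply, Function.comp_apply]
  rw [Equiv.sum_comp σ (fun γ => sin (π * l γ) ^ 2), Equiv.sum_comp σ (fun γ => l γ * (z γ : ℝ))]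

lemma ae_sin_pi_mul_ne_zero {ι : Type*} [Fintype ι] (i : ι) :
    ∀ᵐ l : ι → ℝ, sin (π * l i) ≠ 0 := by
  have hnull : volume {t : ℝ | sin (π * t) = 0} = 0 := by
    refine ((Set.countable_range ((↑) : ℤ → ℝ)).mono fun t ht => ?_).measure_zero _
    obtain ⟨n, hn⟩ := sin_eq_zero_iff.mp ht
    exact ⟨n, mul_left_cancel₀ pi_ne_zero (by linarith)⟩
  exact ae_iff.mpr (by
    simpa [← volume_pi] using
      Measure.pi_eval_preimage_null (fun _ : ι => (volume : Measure ℝ)) (i := i) hnull)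

lemma abs_mul_div_le_one {a c D : ℝ} (ha : 0 ≤ a) (haD : a ≤ D) (hc : |c| ≤ 1) :
    |a * c / D| ≤ 1 := by
  rw [abs_div, abs_mul, abs_of_nonneg ha, abs_of_nonneg (ha.trans haD)]
  exact div_le_one_of_le₀ (by nlinarith [abs_nonneg c]) (ha.trans haD)

lemma latticeGamma_self {d : ℕ} (α : Fin d) (z : Fin d → ℤ) :
    latticeGamma d α α z = -∫ l in unitCube (Fin d),
      sin (π * l α) ^ 2 * cos (2 * π * ∑ γ, l γ * (z γ : ℝ)) / ∑ γ, sin (π * l γ) ^ 2 := by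
  simp only [latticeGamma, sub_add_cancel, sq, unitCube]

lemma sum_latticeGamma_self {d : ℕ} {z : Fin d → ℤ} (hz : z ≠ 0) :
    ∑ α, latticeGamma d α α z = 0 := by
  obtain ⟨i, -⟩ := Function.ne_iff.mp hz
  have hint : ∀ α : Fin d, IntegrableOn (fun l : Fin d → ℝ =>
      sin (π * l α) ^ 2 * cos (2 * π * ∑ γ, l γ * (z γ : ℝ)) / ∑ γ, sin (π * l γ) ^ 2)
      (unitCube (Fin d)) := fun α =>
    IntegrableOn.of_bound (isCompact_univ_pi fun _ => isCompact_Icc).measure_lt_top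
      (by fun_prop : Measurable _).aestronglyMeasurable 1 (ae_of_all _ fun l =>
        abs_mul_div_le_one (sq_nonneg _)
          (Finset.single_le_sum (fun γ _ => sq_nonneg (sin (π * l γ))) (Finset.mem_univ α))
          (abs_cos_le_one _))
  have hsum : ∀ᵐ l ∂volume.restrict (unitCube (Fin d)),
      ∑ α, sin (π * l α) ^ 2 * cos (2 * π * ∑ γ, l γ * (z γ : ℝ)) / ∑ γ, sin (π * l γ) ^ 2
        = cos (2 * π * ∑ γ, l γ * (z γ : ℝ)) := by
    refine ae_restrict_of_ae ((ae_sin_pi_mul_ne_zero i).mono fun l hl => ?_)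
    have hD : ∑ γ, sin (π * l γ) ^ 2 ≠ 0 :=
      (Finset.sum_pos' (fun γ _ => sq_nonneg _) ⟨i, Finset.mem_univ i, by positivity⟩).ne'
    rw [← Finset.sum_div, ← Finset.sum_mul, mul_div_right_comm, div_self hD, one_mul]
  simp only [latticeGamma_self, Finset.sum_neg_distrib, ← integral_finsetSum _ fun α _ => hint α,
    integral_congr_ae hsum, integral_unitCube_cos_two_pi_inner hz, neg_zero]

lemma latticeGamma_two_comp_swap {z : Fin 2 → ℤ} (hz : z ≠ 0) :
    latticeGamma 2 0 0 (z ∘ Equiv.swap 0 1) = -latticeGamma 2 0 0 z := by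
  rw [latticeGamma_comp_perm, Equiv.swap_apply_left, eq_neg_iff_add_eq_zero, add_comm]
  simpa [Fin.sum_univ_two] using sum_latticeGamma_self hz

lemma tsum_eq_zero_of_comp_eq_neg {β G : Type*} [AddCommGroup G] [TopologicalSpace G]
    [IsTopologicalAddGroup G] [T2Space G] [IsAddTorsionFree G] {f : β → G} (e : Equiv.Perm β)
    (h : ∀ b, f (e b) = -f b) : ∑' b, f b = 0 :=
  self_eq_neg.mp ((e.tsum_eq f).symm.trans ((tsum_congr h).trans tsum_neg))

/-- In dimension 2, `Γ₁₁(y,x) = -Γ₁₁(x,y)` for `(x,y) ≠ (0,0)`; consequently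
`Σ_{z ≠ 0} Γ₁₁(z)³ = 0` whenever the sum converges absolutely. -/
theorem latticeGamma_2D_antisymm_and_cube_sum :
    (∀ x y : ℤ, (x, y) ≠ (0, 0) →
        latticeGamma 2 0 0 ![y, x] = -latticeGamma 2 0 0 ![x, y]) ∧
    (Summable (fun z : Fin 2 → ℤ => |latticeGamma 2 0 0 z ^ 3|) →
      ∑' z : {z : Fin 2 → ℤ // z ≠ 0}, latticeGamma 2 0 0 (z : Fin 2 → ℤ) ^ 3 = 0) := by
  refine ⟨fun x y hxy => ?_, fun _ => ?_⟩
  · have hz : ![x, y] ≠ 0 := by simpa [funext_iff, Fin.forall_fin_two] using hxy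
    have hswap : ![y, x] = ![x, y] ∘ Equiv.swap 0 1 := by ext i; fin_cases i <;> rfl
    rw [hswap, latticeGamma_two_comp_swap hz]
  · let swap : Equiv.Perm {z : Fin 2 → ℤ // z ≠ 0} :=
      Equiv.Perm.subtypePerm ((Equiv.swap 0 1).arrowCongr (Equiv.refl ℤ)) fun z => by
        simp [funext_iff, Fin.forall_fin_two, and_comm]
    refine tsum_eq_zero_of_comp_eq_neg swap fun z => ?_
    change latticeGamma 2 0 0 (z ∘ Equiv.swap 0 1) ^ 3 = _
    rw [latticeGamma_two_comp_swap z.2, Odd.neg_pow (by decide)]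
end

section
/- For the truncated Bruggeman functional equation in dimension d: if ξ solves 1/ξ = 1 + d Σ_{n=2}^∞ (-1)ⁿ m_n/(1+δξ)ⁿ with δ = d-1 and moments m_n = E[uⁿ], then the expansion of ξ up to third-order moments is ξ = 1 - m₂/d + m₃/d² + O(|u|⁴); in particular the map G(ξ) = (1 + d Σ (-1)ⁿ m_n/(1+δξ)ⁿ)⁻¹ satisfies G(1) = 1 - m₂/d + m₃/d² + O(|u|⁴) when |u| ≤ ε. -/
/-!
Write `m n = E[uⁿ]`, so `|m n| ≤ εⁿ`. At `ξ = 1` the denominators are `dⁿ`, hence the terms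
of the series are dominated by a geometric sequence of ratio `r = ε/d ≤ 1/2`. Peeling off the
`n = 2, 3` terms, `A := d Σ (-1)ⁿ m n / dⁿ` equals `m₂/d - m₃/d²` up to `2ε⁴`, and `|A| ≤ 2ε²`.
Finally `(1 + A)⁻¹ = 1 - A + O(A²)`, so the truncation costs at most `10 ε⁴`.
-/

open MeasureTheory

noncomputable def bruggemanMap (d : ℝ) (m : ℕ → ℝ) (ξ : ℝ) : ℝ :=
  (1 + d * ∑' n : ℕ, (-1 : ℝ) ^ (n + 2) * m (n + 2) / (1 + (d - 1) * ξ) ^ (n + 2))⁻¹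

lemma abs_integral_pow_le {Ω : Type*} [MeasurableSpace Ω] {μ : Measure Ω}
    [IsProbabilityMeasure μ] {u : Ω → ℝ} {ε : ℝ} (hu : ∀ᵐ ω ∂μ, |u ω| ≤ ε) (n : ℕ) :
    |∫ ω, u ω ^ n ∂μ| ≤ ε ^ n := by
  have hpow : ∀ᵐ ω ∂μ, ‖u ω ^ n‖ ≤ ε ^ n := by
    filter_upwards [hu] with ω hω
    rw [Real.norm_eq_abs, abs_pow]
    exact pow_le_pow_left₀ (abs_nonneg _) hω n
  simpa [Real.norm_eq_abs] using norm_integral_le_of_norm_le_const hpow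

lemma abs_tsum_nat_add_le_of_abs_le_geometric {a : ℕ → ℝ} {r : ℝ} (hr0 : 0 ≤ r)
    (hr : r ≤ 1 / 2) (ha : ∀ n, |a n| ≤ r ^ n) (k : ℕ) :
    |∑' n, a (n + k)| ≤ 2 * r ^ k := by
  have hsum : HasSum (fun n ↦ r ^ k * r ^ n) (r ^ k * (1 - r)⁻¹) :=
    (hasSum_geometric_of_lt_one hr0 (by linarith)).mul_left _
  have hinv : (1 - r)⁻¹ ≤ 2 := by
    rw [inv_le_comm₀ (by linarith) two_pos]
    linarith
  calc |∑' n, a (n + k)| ≤ r ^ k * (1 - r)⁻¹ :=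
        tsum_of_norm_bounded (f := fun n ↦ a (n + k)) hsum fun n ↦ by
          simpa [pow_add, mul_comm] using ha (n + k)
    _ ≤ 2 * r ^ k := by nlinarith [pow_nonneg hr0 k]

lemma abs_inv_one_add_sub_le {A : ℝ} (hA : |A| ≤ 1 / 2) :
    |(1 + A)⁻¹ - (1 - A)| ≤ 2 * A ^ 2 := by
  have hpos : 1 / 2 ≤ 1 + A := by linarith [neg_abs_le A]
  have hid : (1 + A)⁻¹ - (1 - A) = A ^ 2 / (1 + A) := by
    field_simp
    ring
  rw [hid, abs_div, abs_of_nonneg (sq_nonneg A), abs_of_pos (by linarith),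
    div_le_iff₀ (by linarith)]
  nlinarith [sq_nonneg A]

section Series

variable {d ε : ℝ} {m : ℕ → ℝ}

lemma abs_moment_div_pow_le (hd : 0 < d) (hm : ∀ n, |m n| ≤ ε ^ n) (n : ℕ) :
    |(-1 : ℝ) ^ n * m n / d ^ n| ≤ (ε / d) ^ n := by
  rw [abs_div, abs_mul, abs_pow, abs_pow, abs_neg, abs_one, one_pow, one_mul, abs_of_pos hd,
    div_pow]
  exact div_le_div_of_nonneg_right (hm n) (by positivity)

lemma div_le_half_of_lt_half (hd : 1 ≤ d) (hε0 : 0 ≤ ε) (hε : ε < 1 / 2) :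
    0 ≤ ε / d ∧ ε / d ≤ 1 / 2 :=
  ⟨div_nonneg hε0 (by linarith), (div_le_self hε0 hd).trans hε.le⟩

lemma abs_mul_tsum_moment_le (hd : 1 ≤ d) (hε0 : 0 ≤ ε) (hε : ε < 1 / 2)
    (hm : ∀ n, |m n| ≤ ε ^ n) :
    |d * ∑' n : ℕ, (-1 : ℝ) ^ (n + 2) * m (n + 2) / d ^ (n + 2)| ≤ 2 * ε ^ 2 := by
  obtain ⟨hr0, hr⟩ := div_le_half_of_lt_half hd hε0 hε
  have hd0 : 0 < d := by linarith
  have htail :=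
    abs_tsum_nat_add_le_of_abs_le_geometric hr0 hr (abs_moment_div_pow_le hd0 hm) 2
  rw [abs_mul, abs_of_pos hd0]
  calc d * |∑' n : ℕ, (-1 : ℝ) ^ (n + 2) * m (n + 2) / d ^ (n + 2)|
      ≤ d * (2 * (ε / d) ^ 2) := by gcongr
    _ = 2 * ε ^ 2 / d := by field_simp
    _ ≤ 2 * ε ^ 2 := div_le_self (by positivity) hd

lemma abs_mul_tsum_moment_sub_le (hd : 1 ≤ d) (hε0 : 0 ≤ ε) (hε : ε < 1 / 2)
    (hm : ∀ n, |m n| ≤ ε ^ n) :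
    |d * ∑' n : ℕ, (-1 : ℝ) ^ (n + 2) * m (n + 2) / d ^ (n + 2) - (m 2 / d - m 3 / d ^ 2)|
      ≤ 2 * ε ^ 4 := by
  obtain ⟨hr0, hr⟩ := div_le_half_of_lt_half hd hε0 hε
  set b : ℕ → ℝ := fun n ↦ (-1 : ℝ) ^ n * m n / d ^ n
  have hd0 : 0 < d := by linarith
  have hb : ∀ n, |b n| ≤ (ε / d) ^ n := abs_moment_div_pow_le hd0 hm
  have hsum : Summable fun n ↦ b (n + 2) :=
    (summable_nat_add_iff 2).mpr <| .of_norm_bounded (summable_geometric_of_lt_one hr0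
      (by linarith)) hb
  have hsplit := hsum.sum_add_tsum_nat_add 2
  simp only [Finset.sum_range_succ, Finset.sum_range_zero, zero_add] at hsplit
  have hid : d * ∑' n, b (n + 2) - (m 2 / d - m 3 / d ^ 2) = d * ∑' n, b (n + 4) := by
    rw [← hsplit]
    simp only [b]
    field_simp
    ring
  change |d * ∑' n, b (n + 2) - _| ≤ _
  rw [hid, abs_mul, abs_of_pos hd0]
  have hd3 : 1 ≤ d ^ 3 := one_le_pow₀ hd
  calc d * |∑' n, b (n + 4)| ≤ d * (2 * (ε / d) ^ 4) := by
        gcongr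
        exact abs_tsum_nat_add_le_of_abs_le_geometric hr0 hr hb 4
    _ = 2 * ε ^ 4 / d ^ 3 := by field_simp
    _ ≤ 2 * ε ^ 4 := div_le_self (by positivity) hd3

lemma abs_bruggemanMap_one_sub_le (hd : 1 ≤ d) (hε0 : 0 ≤ ε) (hε : ε < 1 / 2)
    (hm : ∀ n, |m n| ≤ ε ^ n) :
    |bruggemanMap d m 1 - (1 - m 2 / d + m 3 / d ^ 2)| ≤ 10 * ε ^ 4 := by
  set A := d * ∑' n : ℕ, (-1 : ℝ) ^ (n + 2) * m (n + 2) / d ^ (n + 2)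
  have hG : bruggemanMap d m 1 = (1 + A)⁻¹ := by simp [bruggemanMap, A]
  have hA : |A| ≤ 2 * ε ^ 2 := abs_mul_tsum_moment_le hd hε0 hε hm
  have hAt := abs_mul_tsum_moment_sub_le hd hε0 hε hm
  have hA2 : A ^ 2 ≤ 4 * ε ^ 4 := by nlinarith [sq_abs A, abs_nonneg A]
  have hinv := abs_inv_one_add_sub_le (A := A) (by nlinarith)
  rw [hG]
  calc |(1 + A)⁻¹ - (1 - m 2 / d + m 3 / d ^ 2)|
      ≤ |(1 + A)⁻¹ - (1 - A)| + |A - (m 2 / d - m 3 / d ^ 2)| := by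
        have hflip : 1 - A - (1 - m 2 / d + m 3 / d ^ 2) = -(A - (m 2 / d - m 3 / d ^ 2)) := by
          ring
        have htri := abs_sub_le (1 + A)⁻¹ (1 - A) (1 - m 2 / d + m 3 / d ^ 2)
        rwa [hflip, abs_neg] at htri
    _ ≤ 10 * ε ^ 4 := by linarith

end Series

/-- Third-order expansion of the Bruggeman map: with `δ = d - 1`, `u` a random
variable with `|u| ≤ ε < 1/2` a.s. and `E[u] = 0`, the map
`G(ξ) = (1 + d Σ_{n=2}^∞ (-1)ⁿ E[uⁿ]/(1+δξ)ⁿ)⁻¹` satisfies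
`|G(1) - (1 - E[u²]/d + E[u³]/d²)| ≤ C(d) ε⁴` for a constant `C(d) > 0`. -/
theorem bruggeman_third_order_expansion (d : ℕ) (hd : 2 ≤ d) :
    ∃ C : ℝ, 0 < C ∧
      ∀ {Ω : Type} [MeasurableSpace Ω] (μ : Measure Ω), IsProbabilityMeasure μ →
      ∀ (u : Ω → ℝ), Measurable u →
      ∀ ε : ℝ, 0 ≤ ε → ε < 1 / 2 →
      (∀ ω, |u ω| ≤ ε) →
      (∫ ω, u ω ∂μ) = 0 →
      |(1 + d * ∑' n : ℕ,
            (-1 : ℝ) ^ (n + 2) * (∫ ω, u ω ^ (n + 2) ∂μ) /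
              (1 + (d - 1 : ℝ) * 1) ^ (n + 2))⁻¹ -
          (1 - (∫ ω, u ω ^ 2 ∂μ) / d + (∫ ω, u ω ^ 3 ∂μ) / (d : ℝ) ^ 2)| ≤
        C * ε ^ 4 := by
  refine ⟨10, by norm_num, fun μ _ u _ ε hε0 hε hu _ ↦ ?_⟩
  have hd1 : (1 : ℝ) ≤ d := by exact_mod_cast (by omega : 1 ≤ d)
  exact abs_bruggemanMap_one_sub_le hd1 hε0 hε
    (abs_integral_pow_le (μ := μ) (Filter.Eventually.of_forall hu))
end
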